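/- (Lemma 2) Let W be symmetric, doubly stochastic and positive definite, with 1 a simple eigenvalue and second-largest eigenvalue λ₂ ∈ (0,1). Suppose each ∇f_i is L_i-Lipschitz and set L_F^g = max_i L_i. Given α > 0, let x̂* be a local minimizer of Q_α (in particular ∇Q_α(x̂*) = 0) and let x̄* = (1/m) Σ_{j=1}^m x̂*_j. Then ‖∇f(x̄*)‖ ≤ α · L_F^g · m√m · ‖∇F(x̂*)‖ / (1 − λ₂). -/

import Mathlib

open scoped BigOperators RealInnerProductSpace
open Matrix MeasureTheory

noncomputable section

/-- The stacked space `(ℝⁿ)ᵐ ≅ ℝ^{mn}`. -/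
abbrev BigSpace (m n : ℕ) := EuclideanSpace ℝ (Fin m × Fin n)

/-- The `i`-th block component `x̂ᵢ ∈ ℝⁿ` of `x̂ ∈ ℝ^{mn}`. -/
def comp {m n : ℕ} (x : BigSpace m n) (i : Fin m) : EuclideanSpace ℝ (Fin n) :=
  WithLp.toLp 2 (fun j => x (i, j))

/-- `F(x̂) = Σᵢ fᵢ(x̂ᵢ)`. -/
def stackF {m n : ℕ} (f : Fin m → EuclideanSpace ℝ (Fin n) → ℝ) (x : BigSpace m n) : ℝ :=
  ∑ i, f i (comp x i)

/-- The action of `Ŵ = W ⊗ Iₙ` on `ℝ^{mn}`. -/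
def Wact {m n : ℕ} (W : Matrix (Fin m) (Fin m) ℝ) (x : BigSpace m n) : BigSpace m n :=
  WithLp.toLp 2 (fun p => ∑ k, W p.1 k * x (k, p.2))

/-- `W` is doubly stochastic: nonnegative entries, all row and column sums equal `1`. -/
def IsDoublyStochastic {m : ℕ} (W : Matrix (Fin m) (Fin m) ℝ) : Prop :=
  (∀ i j, 0 ≤ W i j) ∧ (∀ i, ∑ j, W i j = 1) ∧ (∀ j, ∑ i, W i j = 1)

/-- The auxiliary function `Q_α(x̂) = F(x̂) + (1/(2α)) x̂ᵀ(I_{mn} − Ŵ)x̂`. -/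
def Qaux {m n : ℕ} (f : Fin m → EuclideanSpace ℝ (Fin n) → ℝ)
    (W : Matrix (Fin m) (Fin m) ℝ) (α : ℝ) (x : BigSpace m n) : ℝ :=
  stackF f x + (1 / (2 * α)) * ⟪x, x - Wact W x⟫

/-- The Hessian quadratic form `vᵀ (∇²g(x)) v`, via the second iterated Fréchet derivative. -/
def hessQF {E : Type*} [NormedAddCommGroup E] [NormedSpace ℝ E]
    (g : E → ℝ) (x v : E) : ℝ :=
  iteratedFDeriv ℝ 2 g x ![v, v]

/-!
Stationarity of `Q_α` at `x̂*` says `x̂* - Ŵ x̂* = -α ∇F(x̂*)`. Since the columns of `W` sum to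
one, summing the blocks gives `∑ᵢ ∇fᵢ(x̂*ᵢ) = 0`, so `∇f(x̄*) = ∑ᵢ (∇fᵢ(x̄*) - ∇fᵢ(x̂*ᵢ))` is
bounded by `L_F^g ∑ᵢ ‖x̄* - x̂*ᵢ‖ ≤ L_F^g √m ‖y‖` with `y = x̂* - 1 ⊗ x̄*`. Since the rows of `W`
sum to one, `(I - Ŵ) y = (I - Ŵ) x̂*`; and every column of `y` sums to zero, i.e. is orthogonal to
the eigenvector `1` of the simple eigenvalue `1`, so `⟪Ŵ y, y⟫ ≤ λ₂ ‖y‖²`. Hence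
`(1 - λ₂) ‖y‖² ≤ ⟪(I - Ŵ) y, y⟫ = -α ⟪∇F(x̂*), y⟫`, i.e. `‖y‖ ≤ α ‖∇F(x̂*)‖ / (1 - λ₂)`.
-/

def stack {m n : ℕ} (v : Fin m → EuclideanSpace ℝ (Fin n)) : BigSpace m n :=
  WithLp.toLp 2 (fun p => v p.1 p.2)

def column {m n : ℕ} (x : BigSpace m n) (j : Fin n) : EuclideanSpace ℝ (Fin m) :=
  WithLp.toLp 2 (fun i => x (i, j))

section Blocks

variable {m n : ℕ}

@[simp] lemma comp_apply (x : BigSpace m n) (i : Fin m) (j : Fin n) : comp x i j = x (i, j) := rfl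

@[simp] lemma column_apply (x : BigSpace m n) (i : Fin m) (j : Fin n) : column x j i = x (i, j) :=
  rfl

@[simp] lemma comp_stack (v : Fin m → EuclideanSpace ℝ (Fin n)) (i : Fin m) :
    comp (stack v) i = v i := rfl

@[simp] lemma comp_sub (x y : BigSpace m n) (i : Fin m) : comp (x - y) i = comp x i - comp y i :=
  rfl

@[simp] lemma comp_smul (c : ℝ) (x : BigSpace m n) (i : Fin m) : comp (c • x) i = c • comp x i :=
  rfl

def compCLM (i : Fin m) : BigSpace m n →L[ℝ] EuclideanSpace ℝ (Fin n) :=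
  LinearMap.toContinuousLinearMap
    { toFun := fun x => comp x i
      map_add' := fun _ _ => rfl
      map_smul' := fun _ _ => rfl }

@[simp] lemma compCLM_apply (i : Fin m) (x : BigSpace m n) : compCLM i x = comp x i := rfl

lemma inner_eq_sum_inner_comp (x y : BigSpace m n) : ⟪x, y⟫ = ∑ i, ⟪comp x i, comp y i⟫ := by
  simp only [PiLp.inner_apply, Fintype.sum_prod_type]; rfl

lemma inner_eq_sum_inner_column (x y : BigSpace m n) : ⟪x, y⟫ = ∑ j, ⟪column x j, column y j⟫ := by
  simp only [PiLp.inner_apply, Fintype.sum_prod_type]; rw [Finset.sum_comm]; rfl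

lemma norm_sq_eq_sum_norm_comp_sq (x : BigSpace m n) : ‖x‖ ^ 2 = ∑ i, ‖comp x i‖ ^ 2 := by
  simp only [← real_inner_self_eq_norm_sq, inner_eq_sum_inner_comp]

lemma sum_norm_comp_le (x : BigSpace m n) : ∑ i, ‖comp x i‖ ≤ √m * ‖x‖ := by
  have hcs := sq_sum_le_card_mul_sum_sq (s := Finset.univ) (f := fun i => ‖comp x i‖)
  rw [Finset.card_univ, Fintype.card_fin, ← norm_sq_eq_sum_norm_comp_sq] at hcs
  rw [← Real.sqrt_sq (Finset.sum_nonneg fun i _ => norm_nonneg (comp x i)),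
    ← Real.sqrt_sq (norm_nonneg x), ← Real.sqrt_mul (Nat.cast_nonneg m)]
  exact Real.sqrt_le_sqrt hcs

lemma comp_Wact (W : Matrix (Fin m) (Fin m) ℝ) (x : BigSpace m n) (i : Fin m) :
    comp (Wact W x) i = ∑ k, W i k • comp x k := by
  ext j; simp [Wact]

lemma column_Wact (W : Matrix (Fin m) (Fin m) ℝ) (x : BigSpace m n) (j : Fin n) :
    column (Wact W x) j = Matrix.toEuclideanLin W (column x j) := by
  ext i; simp [Wact, Matrix.mulVec, dotProduct]

end Blocks

section Mixing

variable {m n : ℕ} {W : Matrix (Fin m) (Fin m) ℝ}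

def WactCLM (W : Matrix (Fin m) (Fin m) ℝ) : BigSpace m n →L[ℝ] BigSpace m n :=
  LinearMap.toContinuousLinearMap
    { toFun := Wact W
      map_add' := fun x y => by ext p; simp [Wact, mul_add, Finset.sum_add_distrib]
      map_smul' := fun c x => by ext p; simp [Wact, Finset.mul_sum, mul_left_comm] }

@[simp] lemma WactCLM_apply (x : BigSpace m n) : WactCLM W x = Wact W x := rfl

lemma inner_Wact_left (hW : W.IsHermitian) (x y : BigSpace m n) :
    ⟪Wact W x, y⟫ = ⟪x, Wact W y⟫ := by
  simp only [inner_eq_sum_inner_column, column_Wact]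
  exact Finset.sum_congr rfl fun j _ => Matrix.isSymmetric_toEuclideanLin_iff.2 hW _ _

lemma sum_comp_Wact (hcol : ∀ j, ∑ i, W i j = 1) (x : BigSpace m n) :
    ∑ i, comp (Wact W x) i = ∑ i, comp x i := by
  simp only [comp_Wact]
  rw [Finset.sum_comm]
  simp [← Finset.sum_smul, hcol]

lemma sum_comp_sub_Wact (hcol : ∀ j, ∑ i, W i j = 1) (x : BigSpace m n) :
    ∑ i, comp (x - Wact W x) i = 0 := by
  simp [Finset.sum_sub_distrib, sum_comp_Wact hcol]

lemma sum_comp_eq_zero_of_sub_Wact_eq_smul (hcol : ∀ j, ∑ i, W i j = 1) {c : ℝ} (hc : c ≠ 0)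
    {x G : BigSpace m n} (h : x - Wact W x = c • G) : ∑ i, comp G i = 0 := by
  have := sum_comp_sub_Wact hcol x
  simpa [h, ← Finset.smul_sum, hc] using this

lemma Wact_stack_const (hrow : ∀ i, ∑ j, W i j = 1) (v : EuclideanSpace ℝ (Fin n)) :
    Wact W (stack fun _ => v) = stack fun _ => v := by
  ext p; simp [Wact, stack, ← Finset.sum_mul, hrow]

end Mixing

lemma LinearMap.IsSymmetric.inner_eq_zero_of_apply_eq_smul {E : Type*} [NormedAddCommGroup E]
    [InnerProductSpace ℝ E] {T : E →ₗ[ℝ] E} (hT : T.IsSymmetric) {u v : E} {μ ν : ℝ}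
    (hu : T u = μ • u) (hv : T v = ν • v) (hne : μ ≠ ν) : ⟪u, v⟫ = 0 := by
  have h : μ * ⟪u, v⟫ = ν * ⟪u, v⟫ := by
    rw [← real_inner_smul_left, ← hu, hT, hv, real_inner_smul_right]
  exact (mul_eq_mul_right_iff.1 h).resolve_left hne

section Spectral

variable {ι : Type*} [Fintype ι] [DecidableEq ι]

namespace Matrix.IsHermitian

variable {W : Matrix ι ι ℝ} (hW : W.IsHermitian)

lemma toEuclideanLin_eigenvectorBasis (i : ι) :
    toEuclideanLin W (hW.eigenvectorBasis i) = hW.eigenvalues i • hW.eigenvectorBasis i := by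
  ext k
  simpa using congrFun (hW.mulVec_eigenvectorBasis i) k

lemma inner_toEuclideanLin_eq_sum (u : EuclideanSpace ℝ ι) :
    ⟪toEuclideanLin W u, u⟫ = ∑ i, hW.eigenvalues i * ⟪hW.eigenvectorBasis i, u⟫ ^ 2 := by
  rw [← hW.eigenvectorBasis.sum_inner_mul_inner]
  refine Finset.sum_congr rfl fun i _ => ?_
  rw [isSymmetric_toEuclideanLin_iff.2 hW, toEuclideanLin_eigenvectorBasis, real_inner_smul_right,
    real_inner_comm u]
  ring

lemma norm_sq_eq_sum (u : EuclideanSpace ℝ ι) :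
    ‖u‖ ^ 2 = ∑ i, ⟪hW.eigenvectorBasis i, u⟫ ^ 2 := by
  rw [← real_inner_self_eq_norm_sq, ← hW.eigenvectorBasis.sum_inner_mul_inner]
  refine Finset.sum_congr rfl fun i _ => ?_
  rw [real_inner_comm u]; ring

lemma inner_eigenvectorBasis_eq_zero_of_sum_eq_zero (hrow : ∀ i, ∑ j, W i j = 1) {i₀ : ι}
    (hi₀ : ∀ i, hW.eigenvalues i = 1 → i = i₀) {u : EuclideanSpace ℝ ι} (hu : ∑ k, u k = 0) :
    ⟪hW.eigenvectorBasis i₀, u⟫ = 0 := by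
  set b := hW.eigenvectorBasis
  set one : EuclideanSpace ℝ ι := WithLp.toLp 2 1
  have hone : toEuclideanLin W one = (1 : ℝ) • one := by
    ext i; simp [one, Matrix.mulVec, dotProduct, hrow]
  have horth : ∀ i ≠ i₀, ⟪one, b i⟫ = 0 := fun i hi =>
    (isSymmetric_toEuclideanLin_iff.2 hW).inner_eq_zero_of_apply_eq_smul hone
      (hW.toEuclideanLin_eigenvectorBasis i) fun h => hi (hi₀ i h.symm)
  have hexpand : ∀ v, ⟪one, v⟫ = ⟪one, b i₀⟫ * ⟪b i₀, v⟫ := fun v => by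
    rw [← b.sum_inner_mul_inner,
      Finset.sum_eq_single i₀ (fun i _ hi => by rw [horth i hi, zero_mul]) (by simp)]
  have hne : ⟪one, b i₀⟫ ≠ 0 := by
    intro h
    have := hexpand one
    rw [h, zero_mul, inner_self_eq_zero] at this
    exact one_ne_zero (congrFun (congrArg WithLp.ofLp this) i₀)
  have := hexpand u
  rw [show ⟪one, u⟫ = 0 by simpa [one, PiLp.inner_apply] using hu] at this
  exact (mul_eq_zero.1 this.symm).resolve_left hne

lemma inner_toEuclideanLin_le_of_sum_eq_zero (hrow : ∀ i, ∑ j, W i j = 1)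
    (hsimple : ∃! i, hW.eigenvalues i = 1) {lam : ℝ}
    (hub : ∀ i, hW.eigenvalues i = 1 ∨ hW.eigenvalues i ≤ lam) {u : EuclideanSpace ℝ ι}
    (hu : ∑ k, u k = 0) : ⟪toEuclideanLin W u, u⟫ ≤ lam * ‖u‖ ^ 2 := by
  obtain ⟨i₀, -, hi₀⟩ := hsimple
  have hc := hW.inner_eigenvectorBasis_eq_zero_of_sum_eq_zero hrow hi₀ hu
  rw [hW.inner_toEuclideanLin_eq_sum, hW.norm_sq_eq_sum, Finset.mul_sum]
  refine Finset.sum_le_sum fun i _ => ?_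
  rcases hub i with h | h
  · simp [hi₀ i h, hc]
  · exact mul_le_mul_of_nonneg_right h (sq_nonneg _)

end Matrix.IsHermitian

end Spectral

section Calculus

variable {E : Type*} [NormedAddCommGroup E] [InnerProductSpace ℝ E] [CompleteSpace E]

lemma gradient_fun_sum {ι : Type*} (s : Finset ι) {f : ι → E → ℝ} {x : E}
    (hf : ∀ i ∈ s, DifferentiableAt ℝ (f i) x) :
    gradient (fun y => ∑ i ∈ s, f i y) x = ∑ i ∈ s, gradient (f i) x := by
  simp only [gradient, fderiv_fun_sum hf, map_sum]

lemma IsLocalMin.eq_zero_of_hasGradientAt_add_quadratic {g : E → ℝ} {g' x : E} {T : E →L[ℝ] E}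
    (hT : (T : E →ₗ[ℝ] E).IsSymmetric) (c : ℝ) (hg : HasGradientAt g g' x)
    (hmin : IsLocalMin (fun y => g y + c * ⟪y, T y⟫) x) : g' + (2 * c) • T x = 0 := by
  have hquad : (fun y => ⟪y, T y⟫) = T.reApplyInnerSelf := by
    ext y; simp [ContinuousLinearMap.reApplyInnerSelf, real_inner_comm]
  have hderiv := (hasGradientAt_iff_hasFDerivAt.1 hg).add
    ((hT.hasStrictFDerivAt_reApplyInnerSelf x).hasFDerivAt.const_mul c)
  rw [← hquad] at hderiv
  have hzero := congrArg (fun φ => φ (g' + (2 * c) • T x)) (hmin.hasFDerivAt_eq_zero hderiv)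
  simp only [_root_.add_apply, _root_.smul_apply, InnerProductSpace.toDual_apply_apply,
    innerSL_apply_apply, _root_.zero_apply, smul_eq_mul, nsmul_eq_mul, Nat.cast_ofNat] at hzero
  rw [← inner_self_eq_zero (𝕜 := ℝ), inner_add_left, real_inner_smul_left]
  linarith

end Calculus

section Penalty

variable {m n : ℕ} {f : Fin m → EuclideanSpace ℝ (Fin n) → ℝ} {W : Matrix (Fin m) (Fin m) ℝ}

lemma hasGradientAt_stackF {x : BigSpace m n} (hf : ∀ i, DifferentiableAt ℝ (f i) (comp x i)) :
    HasGradientAt (stackF f) (stack fun i => gradient (f i) (comp x i)) x := by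
  have hderiv : HasFDerivAt (stackF f) (∑ i, (fderiv ℝ (f i) (comp x i)).comp (compCLM i)) x :=
    HasFDerivAt.fun_sum fun i _ => (hf i).hasFDerivAt.comp x (compCLM i).hasFDerivAt
  refine hasGradientAt_iff_hasFDerivAt.2 (hderiv.congr_fderiv ?_)
  ext v
  simp [inner_eq_sum_inner_comp (stack _), inner_gradient_left]

lemma sub_Wact_eq_of_isLocalMin (hf : ∀ i, Differentiable ℝ (f i)) (hW : W.IsHermitian) {α : ℝ}
    (hα : α ≠ 0) {x : BigSpace m n} (hmin : IsLocalMin (Qaux f W α) x) :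
    x - Wact W x = -α • stack fun i => gradient (f i) (comp x i) := by
  have hT : ((ContinuousLinearMap.id ℝ (BigSpace m n) - WactCLM W : BigSpace m n →L[ℝ] _) :
      BigSpace m n →ₗ[ℝ] BigSpace m n).IsSymmetric := by
    intro u v
    simp [inner_sub_left, inner_sub_right, inner_Wact_left hW]
  have h := hmin.eq_zero_of_hasGradientAt_add_quadratic hT (1 / (2 * α))
    (hasGradientAt_stackF fun i => (hf i).differentiableAt)
  simp only [_root_.sub_apply, ContinuousLinearMap.id_apply, WactCLM_apply,
    show 2 * (1 / (2 * α)) = α⁻¹ by field_simp] at h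
  rw [neg_smul, ← smul_neg, ← eq_neg_of_add_eq_zero_right h, smul_inv_smul₀ hα]

end Penalty

lemma norm_le_div_of_mul_norm_sq_le_inner {E : Type*} [NormedAddCommGroup E]
    [InnerProductSpace ℝ E] {c : ℝ} (hc : 0 < c) {y w : E} (h : c * ‖y‖ ^ 2 ≤ ⟪w, y⟫) :
    ‖y‖ ≤ ‖w‖ / c := by
  rw [le_div_iff₀ hc]
  rcases (norm_nonneg y).eq_or_lt with hy | hy
  · rw [← hy, zero_mul]; exact norm_nonneg w
  · refine le_of_mul_le_mul_right ?_ hy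
    nlinarith [real_inner_le_norm w y]

section Consensus

variable {m n : ℕ} {W : Matrix (Fin m) (Fin m) ℝ}

lemma sum_comp_sub_stack_mean (x : BigSpace m n) :
    ∑ i, comp (x - stack fun _ => (m : ℝ)⁻¹ • ∑ j, comp x j) i = 0 := by
  rcases Nat.eq_zero_or_pos m with rfl | hm
  · simp
  · have hm' : (m : ℝ) ≠ 0 := by positivity
    simp [Finset.sum_sub_distrib, ← Nat.cast_smul_eq_nsmul ℝ, smul_smul, hm']

lemma inner_Wact_le_of_sum_comp_eq_zero (hW : W.IsHermitian) (hrow : ∀ i, ∑ j, W i j = 1)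
    (hsimple : ∃! i, hW.eigenvalues i = 1) {lam : ℝ}
    (hub : ∀ i, hW.eigenvalues i = 1 ∨ hW.eigenvalues i ≤ lam) {y : BigSpace m n}
    (hy : ∑ i, comp y i = 0) : ⟪Wact W y, y⟫ ≤ lam * ‖y‖ ^ 2 := by
  rw [← real_inner_self_eq_norm_sq, inner_eq_sum_inner_column, inner_eq_sum_inner_column,
    Finset.mul_sum]
  refine Finset.sum_le_sum fun j _ => ?_
  rw [column_Wact, real_inner_self_eq_norm_sq]
  refine hW.inner_toEuclideanLin_le_of_sum_eq_zero hrow hsimple hub ?_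
  simpa using congrArg (fun v => v j) hy

lemma norm_sub_stack_mean_le (hW : W.IsHermitian) (hds : IsDoublyStochastic W)
    (hsimple : ∃! i, hW.eigenvalues i = 1) {lam : ℝ} (hlam : lam < 1)
    (hub : ∀ i, hW.eigenvalues i = 1 ∨ hW.eigenvalues i ≤ lam) {α : ℝ} (hα : 0 ≤ α)
    {x G : BigSpace m n} (hx : x - Wact W x = -α • G) :
    ‖x - stack fun _ => (m : ℝ)⁻¹ • ∑ j, comp x j‖ ≤ α * ‖G‖ / (1 - lam) := by
  set y := x - stack fun _ => (m : ℝ)⁻¹ • ∑ j, comp x j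
  have hy : y - Wact W y = x - Wact W x := by
    rw [← WactCLM_apply, map_sub, WactCLM_apply, WactCLM_apply, Wact_stack_const hds.2.1]
    simp only [y]
    abel
  have hcoercive : (1 - lam) * ‖y‖ ^ 2 ≤ ⟪-α • G, y⟫ := by
    have := inner_Wact_le_of_sum_comp_eq_zero hW hds.2.1 hsimple hub (sum_comp_sub_stack_mean x)
    rw [← hx, ← hy, inner_sub_left, real_inner_self_eq_norm_sq]
    linarith
  calc ‖y‖ ≤ ‖-α • G‖ / (1 - lam) := norm_le_div_of_mul_norm_sq_le_inner (by linarith) hcoercive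
    _ = α * ‖G‖ / (1 - lam) := by rw [norm_smul, norm_neg, Real.norm_of_nonneg hα]

end Consensus

section Lipschitz

variable {E F : Type*} [NormedAddCommGroup E] [SeminormedAddCommGroup F]

lemma nonneg_of_norm_sub_le_mul_norm_sub [Nontrivial E] {g : E → F} {L : ℝ}
    (hg : ∀ a b, ‖g a - g b‖ ≤ L * ‖a - b‖) : 0 ≤ L := by
  obtain ⟨a, b, hab⟩ := exists_pair_ne E
  refine le_of_mul_le_mul_right ?_ (norm_pos_iff.2 (sub_ne_zero.2 hab))
  rw [zero_mul]
  exact (norm_nonneg _).trans (hg a b)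

lemma norm_sum_le_of_sum_eq_zero {ι : Type*} [Fintype ι] {g : ι → E → F} {L : ι → ℝ}
    (hg : ∀ i a b, ‖g i a - g i b‖ ≤ L i * ‖a - b‖) {x : ι → E} (hsum : ∑ i, g i (x i) = 0)
    (z : E) : ‖∑ i, g i z‖ ≤ ∑ i, L i * ‖z - x i‖ :=
  calc ‖∑ i, g i z‖ = ‖∑ i, (g i z - g i (x i))‖ := by rw [Finset.sum_sub_distrib, hsum, sub_zero]
    _ ≤ ∑ i, ‖g i z - g i (x i)‖ := norm_sum_le _ _
    _ ≤ ∑ i, L i * ‖z - x i‖ := Finset.sum_le_sum fun i _ => hg i z (x i)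

variable {m n : ℕ} {f : Fin m → EuclideanSpace ℝ (Fin n) → ℝ} {L : Fin m → ℝ}

lemma norm_gradient_sum_le (hf : ∀ i, Differentiable ℝ (f i))
    (hLip : ∀ i a b, ‖gradient (f i) a - gradient (f i) b‖ ≤ L i * ‖a - b‖) {K : ℝ} (hK : 0 ≤ K)
    (hLK : ∀ i, L i ≤ K) {x : BigSpace m n} (hsum : ∑ i, gradient (f i) (comp x i) = 0)
    (z : EuclideanSpace ℝ (Fin n)) :
    ‖gradient (fun y => ∑ i, f i y) z‖ ≤ K * √m * ‖x - stack fun _ => z‖ :=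
  calc ‖gradient (fun y => ∑ i, f i y) z‖ ≤ ∑ i, L i * ‖z - comp x i‖ := by
        rw [gradient_fun_sum _ fun i _ => (hf i).differentiableAt]
        exact norm_sum_le_of_sum_eq_zero hLip hsum z
    _ ≤ K * ∑ i, ‖_root_.comp (x - stack fun _ => z) i‖ := by
        rw [Finset.mul_sum]
        refine Finset.sum_le_sum fun i _ => ?_
        rw [comp_sub, comp_stack, norm_sub_rev]
        exact mul_le_mul_of_nonneg_right (hLK i) (norm_nonneg _)
    _ ≤ K * √m * ‖x - stack fun _ => z‖ := by
        rw [mul_assoc]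
        exact mul_le_mul_of_nonneg_left (sum_norm_comp_le _) hK

end Lipschitz

theorem stmt8_general {m n : ℕ} (hm : 0 < m)
    (f : Fin m → EuclideanSpace ℝ (Fin n) → ℝ)
    (hf : ∀ i, ContDiff ℝ 1 (f i))
    (L : Fin m → ℝ)
    (hLip : ∀ i x y, ‖gradient (f i) x - gradient (f i) y‖ ≤ L i * ‖x - y‖)
    (W : Matrix (Fin m) (Fin m) ℝ) (hW : W.IsHermitian)
    (hds : IsDoublyStochastic W)
    (hsimple : ∃! i, hW.eigenvalues i = 1)
    (lam2 : ℝ) (hlam2_lt : lam2 < 1)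
    (hub : ∀ i, hW.eigenvalues i = 1 ∨ hW.eigenvalues i ≤ lam2)
    (α : ℝ) (hα : 0 < α)
    (xstar : BigSpace m n) (hmin : IsLocalMin (Qaux f W α) xstar) :
    ‖gradient (fun x => ∑ i, f i x) ((m : ℝ)⁻¹ • ∑ j, comp xstar j)‖ ≤
      α * (⨆ i, L i) * ((m : ℝ) * Real.sqrt m) * ‖gradient (stackF f) xstar‖ / (1 - lam2) := by
  -- for `n = 0` both gradients vanish; for `n > 0` the constants `L i` are nonnegative
  obtain rfl | hn := Nat.eq_zero_or_pos n
  · simp [Subsingleton.elim _ (0 : EuclideanSpace ℝ (Fin 0)),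
      Subsingleton.elim _ (0 : BigSpace m 0)]
  have : NeZero n := ⟨hn.ne'⟩
  have hdiff : ∀ i, Differentiable ℝ (f i) := fun i => (hf i).differentiable one_ne_zero
  have hL : ∀ i, L i ≤ ⨆ i, L i := le_ciSup (Set.finite_range L).bddAbove
  have hL0 : 0 ≤ ⨆ i, L i := (nonneg_of_norm_sub_le_mul_norm_sub (hLip ⟨0, hm⟩)).trans (hL _)
  set G := stack fun i => gradient (f i) (comp xstar i)
  have hG : gradient (stackF f) xstar = G :=
    (hasGradientAt_stackF fun i => (hdiff i).differentiableAt).gradient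
  have hstat := sub_Wact_eq_of_isLocalMin hdiff hW hα.ne' hmin
  have hcons := norm_sub_stack_mean_le hW hds hsimple hlam2_lt hub hα.le hstat
  calc ‖gradient (fun x => ∑ i, f i x) ((m : ℝ)⁻¹ • ∑ j, comp xstar j)‖
      ≤ (⨆ i, L i) * √m * ‖xstar - stack fun _ => (m : ℝ)⁻¹ • ∑ j, comp xstar j‖ :=
        norm_gradient_sum_le hdiff hLip hL0 hL
          (sum_comp_eq_zero_of_sub_Wact_eq_smul hds.2.2 (neg_ne_zero.2 hα.ne') hstat) _
    _ ≤ (⨆ i, L i) * √m * (α * ‖G‖ / (1 - lam2)) := by gcongr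
    _ ≤ m * ((⨆ i, L i) * √m * (α * ‖G‖ / (1 - lam2))) :=
        le_mul_of_one_le_left (mul_nonneg (mul_nonneg hL0 (Real.sqrt_nonneg _))
          ((norm_nonneg _).trans hcons)) (by exact_mod_cast hm)
    _ = _ := by rw [hG]; ring

/-- Lemma 2: under the hypotheses on `W` as before, with each `∇fᵢ`
`Lᵢ`-Lipschitz and `L_F^g = maxᵢ Lᵢ`, if `x̂*` is a local minimizer of `Q_α` and
`x̄* = (1/m) Σⱼ x̂*ⱼ`, then `‖∇f(x̄*)‖ ≤ α L_F^g m√m ‖∇F(x̂*)‖ / (1 − λ₂)`,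
where `f = Σᵢ fᵢ`. -/
theorem stmt8 {m n : ℕ} (hm : 0 < m)
    (f : Fin m → EuclideanSpace ℝ (Fin n) → ℝ)
    (hf : ∀ i, ContDiff ℝ 1 (f i))
    (L : Fin m → ℝ)
    (hLip : ∀ i x y, ‖gradient (f i) x - gradient (f i) y‖ ≤ L i * ‖x - y‖)
    (W : Matrix (Fin m) (Fin m) ℝ) (hW : W.IsHermitian)
    (hds : IsDoublyStochastic W) (hpd : W.PosDef)
    (hsimple : ∃! i, hW.eigenvalues i = 1)
    (lam2 : ℝ) (hlam2_pos : 0 < lam2) (hlam2_lt : lam2 < 1)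
    (hub : ∀ i, hW.eigenvalues i = 1 ∨ hW.eigenvalues i ≤ lam2)
    (hmem : ∃ i, hW.eigenvalues i ≠ 1 ∧ hW.eigenvalues i = lam2)
    (α : ℝ) (hα : 0 < α)
    (xstar : BigSpace m n) (hmin : IsLocalMin (Qaux f W α) xstar) :
    ‖gradient (fun x => ∑ i, f i x) ((m : ℝ)⁻¹ • ∑ j, comp xstar j)‖ ≤
      α * (⨆ i, L i) * ((m : ℝ) * Real.sqrt m) * ‖gradient (stackF f) xstar‖ / (1 - lam2) :=
  stmt8_general hm f hf L hLip W hW hds hsimple lam2 hlam2_lt hub α hα xstar hmin
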